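/- Let A be an n×N real matrix satisfying aRIP(3k; L₃, U₃) and aRIP(4k; L₄, U₄) with L₃ < 1. Let x ∈ ℝ^N be k-sparse, let e ∈ ℝⁿ, and set y = Ax + e. Let T̃ ⊆ {1,…,N} with |T̃| ≤ 3k, and let x̃ ∈ ℝ^N be the vector supported in T̃ whose restriction to T̃ equals A_{T̃}† y. Then ‖x − x̃‖₂ ≤ (1 + (L₄+U₄)/(2(1−L₃)))·‖x_{T̃^c}‖₂ + (1−L₃)^{−1/2}·‖e‖₂. -/

import Mathlib

open Finset Matrix

noncomputable def enormR {α : Type*} [Fintype α] (v : α → ℝ) : ℝ :=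
  Real.sqrt (∑ i, (v i) ^ 2)

def restr {N : ℕ} (I : Finset (Fin N)) (x : Fin N → ℝ) : Fin N → ℝ :=
  fun i => if i ∈ I then x i else 0

def sparse {N : ℕ} (k : ℕ) (x : Fin N → ℝ) : Prop :=
  (Finset.univ.filter fun i => x i ≠ 0).card ≤ k

def aRIP {n N : ℕ} (A : Matrix (Fin n) (Fin N) ℝ) (m : ℕ) (L U : ℝ) : Prop :=
  ∀ x : Fin N → ℝ, sparse m x →
    (1 - L) * enormR x ^ 2 ≤ enormR (A.mulVec x) ^ 2 ∧
      enormR (A.mulVec x) ^ 2 ≤ (1 + U) * enormR x ^ 2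

def selects {N : ℕ} (T : Finset (Fin N)) (v : Fin N → ℝ) : Prop :=
  ∀ i ∈ T, ∀ j ∉ T, |v j| ≤ |v i|

def subCols {n N : ℕ} (A : Matrix (Fin n) (Fin N) ℝ) (I : Finset (Fin N)) :
    Matrix (Fin n) I ℝ :=
  fun r c => A r (c : Fin N)

noncomputable def gram {n N : ℕ} (A : Matrix (Fin n) (Fin N) ℝ) (I : Finset (Fin N)) :
    Matrix I I ℝ :=
  (subCols A I)ᵀ * subCols A I

noncomputable def pinvApply {n N : ℕ} (A : Matrix (Fin n) (Fin N) ℝ) (I : Finset (Fin N))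
    (y : Fin n → ℝ) : I → ℝ :=
  ((gram A I)⁻¹ * (subCols A I)ᵀ).mulVec y

noncomputable def pinvVec {n N : ℕ} (A : Matrix (Fin n) (Fin N) ℝ) (I : Finset (Fin N))
    (y : Fin n → ℝ) : Fin N → ℝ :=
  fun i => if h : i ∈ I then pinvApply A I y ⟨i, h⟩ else 0

/-!
On `T`, the least-squares estimate is `x_T + A_T†(A x_{Tᶜ}) + A_T† e`, so the error is `x_{Tᶜ}`
minus the zero extension of the last two terms. Since `A_T A_T†` is an orthogonal projection,
`‖A_T A_T† e‖ ≤ ‖e‖`, and the lower RIP bound on `T` turns this into the noise term. For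
`u = A_T†(A x_{Tᶜ})`, the normal equations give `(1 - L₃)‖u‖² ≤ ‖A_T u‖² = ⟨A u, A x_{Tᶜ}⟩`
(with `u` extended by zero); as `u` and `x_{Tᶜ}` have disjoint supports inside a set of size
`4k`, polarization bounds this inner product by `(L₄ + U₄)/2 · ‖u‖ ‖x_{Tᶜ}‖`.
-/

section EuclideanNorm

variable {α : Type*} [Fintype α]

lemma enormR_eq_norm (v : α → ℝ) : enormR v = ‖WithLp.toLp 2 v‖ := by
  simp [EuclideanSpace.norm_eq, enormR, sq_abs]

lemma enormR_nonneg (v : α → ℝ) : 0 ≤ enormR v := Real.sqrt_nonneg _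

@[simp] lemma enormR_zero : enormR (0 : α → ℝ) = 0 := by simp [enormR]

lemma enormR_pos {v : α → ℝ} (hv : v ≠ 0) : 0 < enormR v := by
  rw [enormR_eq_norm]
  exact norm_pos_iff.mpr (by simpa using hv)

lemma enormR_sq (v : α → ℝ) : enormR v ^ 2 = v ⬝ᵥ v := by
  rw [enormR, Real.sq_sqrt (by positivity)]
  simp [dotProduct, sq]

lemma enormR_add_le (u v : α → ℝ) : enormR (u + v) ≤ enormR u + enormR v := by
  simpa only [enormR_eq_norm, WithLp.toLp_add] using norm_add_le _ _

lemma enormR_sub_le (u v : α → ℝ) : enormR (u - v) ≤ enormR u + enormR v := by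
  simpa only [enormR_eq_norm, WithLp.toLp_sub] using norm_sub_le _ _

lemma enormR_smul (c : ℝ) (v : α → ℝ) : enormR (c • v) = |c| * enormR v := by
  simp only [enormR_eq_norm, WithLp.toLp_smul, norm_smul, Real.norm_eq_abs]

lemma dotProduct_le_enormR_mul (u v : α → ℝ) : u ⬝ᵥ v ≤ enormR u * enormR v := by
  simpa [enormR_eq_norm, EuclideanSpace.inner_toLp_toLp, dotProduct_comm] using
    real_inner_le_norm (WithLp.toLp 2 u) (WithLp.toLp 2 v)

end EuclideanNorm

lemma sparse_of_forall_ne_zero_mem {N m : ℕ} {x : Fin N → ℝ} {S : Finset (Fin N)}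
    (hx : ∀ i, x i ≠ 0 → i ∈ S) (hS : S.card ≤ m) : sparse m x :=
  (card_le_card fun i hi => hx i (mem_filter.mp hi).2).trans hS

section ZeroExtend

variable {n N : ℕ} (T : Finset (Fin N))

def zeroExtend (w : T → ℝ) : Fin N → ℝ :=
  fun i => if h : i ∈ T then w ⟨i, h⟩ else 0

variable {T}

lemma zeroExtend_eq_zero_of_not_mem (w : T → ℝ) {i : Fin N} (hi : i ∉ T) :
    zeroExtend T w i = 0 := dif_neg hi

lemma mem_of_zeroExtend_ne_zero {w : T → ℝ} {i : Fin N} (hi : zeroExtend T w i ≠ 0) : i ∈ T :=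
  by_contra fun hiT => hi (zeroExtend_eq_zero_of_not_mem w hiT)

lemma sum_zeroExtend (w : T → ℝ) (f : Fin N → ℝ → ℝ) (hf : ∀ j, f j 0 = 0) :
    ∑ j, f j (zeroExtend T w j) = ∑ c : T, f c (w c) := by
  rw [← sum_subset (subset_univ T) fun j _ hj => by rw [zeroExtend_eq_zero_of_not_mem w hj, hf],
    ← sum_attach T, univ_eq_attach]
  exact sum_congr rfl fun c _ => by simp [zeroExtend, c.2]

lemma mulVec_zeroExtend (A : Matrix (Fin n) (Fin N) ℝ) (w : T → ℝ) :
    A *ᵥ zeroExtend T w = subCols A T *ᵥ w := by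
  funext r
  simpa [mulVec, dotProduct, subCols] using sum_zeroExtend w (fun j t => A r j * t) (by simp)

lemma enormR_zeroExtend (w : T → ℝ) : enormR (zeroExtend T w) = enormR w := by
  rw [enormR, enormR, sum_zeroExtend w (fun _ t => t ^ 2) (by simp)]

end ZeroExtend

section LeastSquares

variable {m ι : Type*} [Fintype m] [Fintype ι] [DecidableEq ι] {B : Matrix m ι ℝ}

/-- Only meaningful when `B` has independent columns: otherwise `(Bᵀ * B)⁻¹ = 0`. -/
noncomputable def pinv (B : Matrix m ι ℝ) : Matrix ι m ℝ := (Bᵀ * B)⁻¹ * Bᵀ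

lemma pinv_mulVec_mulVec_self (hB : IsUnit (Bᵀ * B).det) (u : ι → ℝ) :
    pinv B *ᵥ (B *ᵥ u) = u := by
  rw [pinv, mulVec_mulVec, Matrix.mul_assoc, nonsing_inv_mul _ hB, one_mulVec]

lemma mulVec_pinv_dotProduct_self (hB : IsUnit (Bᵀ * B).det) (z : m → ℝ) :
    (B *ᵥ (pinv B *ᵥ z)) ⬝ᵥ (B *ᵥ (pinv B *ᵥ z)) = (B *ᵥ (pinv B *ᵥ z)) ⬝ᵥ z := by
  set p := pinv B *ᵥ z
  have normal_eq : Bᵀ *ᵥ (B *ᵥ p) = Bᵀ *ᵥ z := by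
    rw [mulVec_mulVec, mulVec_mulVec, pinv, ← Matrix.mul_assoc, mul_nonsing_inv _ hB,
      Matrix.one_mul]
  calc (B *ᵥ p) ⬝ᵥ (B *ᵥ p) = p ⬝ᵥ Bᵀ *ᵥ (B *ᵥ p) := (dotProduct_transpose_mulVec B p _).symm
    _ = z ⬝ᵥ B *ᵥ p := by rw [normal_eq, dotProduct_transpose_mulVec]
    _ = (B *ᵥ p) ⬝ᵥ z := dotProduct_comm _ _

lemma enormR_mulVec_pinv_le (hB : IsUnit (Bᵀ * B).det) (z : m → ℝ) :
    enormR (B *ᵥ (pinv B *ᵥ z)) ≤ enormR z := by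
  have hw := dotProduct_le_enormR_mul (B *ᵥ (pinv B *ᵥ z)) z
  rw [← mulVec_pinv_dotProduct_self hB, ← enormR_sq] at hw
  nlinarith [enormR_nonneg (B *ᵥ (pinv B *ᵥ z)), enormR_nonneg z]

end LeastSquares

lemma pinvApply_eq_pinv_mulVec {n N : ℕ} (A : Matrix (Fin n) (Fin N) ℝ) (T : Finset (Fin N))
    (y : Fin n → ℝ) : pinvApply A T y = pinv (subCols A T) *ᵥ y := rfl

namespace aRIP

variable {n N m : ℕ} {A : Matrix (Fin n) (Fin N) ℝ} {L U : ℝ} {T : Finset (Fin N)}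

lemma lower_subCols (h : aRIP A m L U) (hT : T.card ≤ m) (u : T → ℝ) :
    (1 - L) * enormR u ^ 2 ≤ enormR (subCols A T *ᵥ u) ^ 2 := by
  have hu : sparse m (zeroExtend T u) :=
    sparse_of_forall_ne_zero_mem (fun _ => mem_of_zeroExtend_ne_zero) hT
  simpa only [enormR_zeroExtend, mulVec_zeroExtend] using (h _ hu).1

lemma isUnit_det_subCols_transpose_mul_self (h : aRIP A m L U) (hL : L < 1) (hT : T.card ≤ m) :
    IsUnit ((subCols A T)ᵀ * subCols A T).det := by
  have hinj : Function.Injective (subCols A T).mulVec := by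
    intro u w huw
    have hzero := h.lower_subCols hT (u - w)
    rw [mulVec_sub, huw, sub_self, enormR_sq, enormR_sq, dotProduct_zero] at hzero
    have hnonneg : 0 ≤ (u - w) ⬝ᵥ (u - w) := by rw [← enormR_sq]; positivity
    have hself : (u - w) ⬝ᵥ (u - w) = 0 := by nlinarith
    exact sub_eq_zero.mp (dotProduct_self_eq_zero.mp hself)
  rw [← isUnit_iff_isUnit_det]
  simpa using (PosDef.conjTranspose_mul_self _ hinj).isUnit

lemma enormR_pinvApply_le (h : aRIP A m L U) (hL : L < 1) (hT : T.card ≤ m) (e : Fin n → ℝ) :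
    enormR (pinvApply A T e) ≤ (Real.sqrt (1 - L))⁻¹ * enormR e := by
  have hproj : (1 - L) * enormR (pinvApply A T e) ^ 2 ≤ enormR e ^ 2 :=
    (h.lower_subCols hT _).trans (pow_le_pow_left₀ (enormR_nonneg _)
      (enormR_mulVec_pinv_le (h.isUnit_det_subCols_transpose_mul_self hL hT) e) 2)
  have hL' : 0 < 1 - L := sub_pos.mpr hL
  rw [inv_mul_eq_div, le_div_iff₀ (Real.sqrt_pos.mpr hL'), ← Real.sqrt_sq (enormR_nonneg _),
    ← Real.sqrt_sq (enormR_nonneg e), ← Real.sqrt_mul (sq_nonneg _)]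
  exact Real.sqrt_le_sqrt (by linarith)

lemma four_mul_dotProduct_mulVec_le (h : aRIP A m L U) {p q : Fin N → ℝ} {S : Finset (Fin N)}
    (hS : S.card ≤ m) (hp : ∀ i, p i ≠ 0 → i ∈ S) (hq : ∀ i, q i ≠ 0 → i ∈ S)
    (hpq : ∀ i, p i * q i = 0) :
    4 * ((A *ᵥ p) ⬝ᵥ (A *ᵥ q)) ≤ (L + U) * (enormR p ^ 2 + enormR q ^ 2) := by
  have hsparse : ∀ r : Fin N → ℝ, (∀ i, p i = 0 → q i = 0 → r i = 0) → sparse m r :=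
    fun r hr => sparse_of_forall_ne_zero_mem (fun i hi => by_contra fun hiS =>
      hi (hr i (by_contra fun h => hiS (hp i h)) (by_contra fun h => hiS (hq i h)))) hS
  have hadd := (h (p + q) (hsparse _ fun i hp hq => by simp [hp, hq])).2
  have hsub := (h (p - q) (hsparse _ fun i hp hq => by simp [hp, hq])).1
  have horth : p ⬝ᵥ q = 0 := sum_eq_zero fun i _ => hpq i
  simp only [enormR_sq, mulVec_add, mulVec_sub, add_dotProduct, dotProduct_add, sub_dotProduct,
    dotProduct_sub, dotProduct_comm q p, dotProduct_comm (A *ᵥ q) (A *ᵥ p), horth] at hadd hsub ⊢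
  linarith

lemma dotProduct_mulVec_le (h : aRIP A m L U) {p q : Fin N → ℝ} {S : Finset (Fin N)}
    (hS : S.card ≤ m) (hp : ∀ i, p i ≠ 0 → i ∈ S) (hq : ∀ i, q i ≠ 0 → i ∈ S)
    (hpq : ∀ i, p i * q i = 0) :
    (A *ᵥ p) ⬝ᵥ (A *ᵥ q) ≤ (L + U) / 2 * (enormR p * enormR q) := by
  by_cases hp0 : p = 0
  · simp [hp0]
  by_cases hq0 : q = 0
  · simp [hq0]
  have ha := enormR_pos hp0
  have hb := enormR_pos hq0
  -- rescaling to `‖p‖ = ‖q‖` turns the polarization bound into the product bound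
  have key := h.four_mul_dotProduct_mulVec_le hS (p := enormR q • p) (q := enormR p • q)
    (fun i hi => hp i (right_ne_zero_of_mul hi)) (fun i hi => hq i (right_ne_zero_of_mul hi))
    fun i => by
      simp only [Pi.smul_apply, smul_eq_mul]
      linear_combination enormR p * enormR q * hpq i
  rw [mulVec_smul, mulVec_smul, smul_dotProduct, dotProduct_smul, enormR_smul, enormR_smul,
    abs_of_pos ha, abs_of_pos hb, smul_eq_mul, smul_eq_mul] at key
  refine le_of_mul_le_mul_left ?_ (by positivity : 0 < 4 * (enormR p * enormR q))
  linear_combination key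

lemma enormR_pinvApply_mulVec_le {s s' : ℕ} {L' U' : ℝ} (h : aRIP A s L U)
    (h' : aRIP A s' L' U') (hL : L < 1) (hLU' : 0 ≤ L' + U') (hT : T.card ≤ s)
    {v : Fin N → ℝ} {S : Finset (Fin N)} (hTS : T ⊆ S) (hS : S.card ≤ s')
    (hvS : ∀ i, v i ≠ 0 → i ∈ S) (hvT : ∀ i ∈ T, v i = 0) :
    enormR (pinvApply A T (A *ᵥ v)) ≤ (L' + U') / (2 * (1 - L)) * enormR v := by
  set u := pinvApply A T (A *ᵥ v) with hu_def
  have hdisj : ∀ i, zeroExtend T u i * v i = 0 := fun i => by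
    by_cases hi : i ∈ T
    · rw [hvT i hi, mul_zero]
    · rw [zeroExtend_eq_zero_of_not_mem u hi, zero_mul]
  have hcross : (1 - L) * enormR u ^ 2 ≤ (L' + U') / 2 * (enormR u * enormR v) :=
    calc (1 - L) * enormR u ^ 2 ≤ enormR (subCols A T *ᵥ u) ^ 2 := h.lower_subCols hT u
      _ = (A *ᵥ zeroExtend T u) ⬝ᵥ (A *ᵥ v) := by
        rw [enormR_sq, hu_def, pinvApply_eq_pinv_mulVec, mulVec_pinv_dotProduct_self
          (h.isUnit_det_subCols_transpose_mul_self hL hT), mulVec_zeroExtend]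
      _ ≤ (L' + U') / 2 * (enormR u * enormR v) := by
        simpa only [enormR_zeroExtend] using h'.dotProduct_mulVec_le hS
          (fun i hi => hTS (mem_of_zeroExtend_ne_zero hi)) hvS hdisj
  have hL' : 0 < 1 - L := sub_pos.mpr hL
  rcases (enormR_nonneg u).eq_or_lt with hu | hu
  · rw [← hu]
    exact mul_nonneg (div_nonneg hLU' (by positivity)) (enormR_nonneg v)
  rw [div_mul_eq_mul_div, le_div_iff₀ (by positivity)]
  nlinarith

end aRIP

lemma sub_pinvVec_eq {n N : ℕ} {A : Matrix (Fin n) (Fin N) ℝ} {T : Finset (Fin N)}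
    (hA : IsUnit ((subCols A T)ᵀ * subCols A T).det) (x : Fin N → ℝ) (e : Fin n → ℝ) :
    x - pinvVec A T (A *ᵥ x + e) = restr Tᶜ x
      - zeroExtend T (pinvApply A T (A *ᵥ restr Tᶜ x) + pinvApply A T e) := by
  set xT : T → ℝ := fun c => x c
  have hx_split : x = zeroExtend T xT + restr Tᶜ x := by
    funext i
    by_cases hi : i ∈ T <;> simp [zeroExtend, xT, restr, hi]
  have hpinv : pinvApply A T (A *ᵥ x + e)
      = xT + (pinvApply A T (A *ᵥ restr Tᶜ x) + pinvApply A T e) := by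
    conv_lhs => rw [hx_split, mulVec_add, mulVec_zeroExtend, add_assoc]
    rw [pinvApply_eq_pinv_mulVec, mulVec_add, mulVec_add, pinv_mulVec_mulVec_self hA]
    rfl
  funext i
  by_cases hi : i ∈ T <;> simp [pinvVec, hpinv, zeroExtend, xT, restr, hi]

theorem stmt11_general {n N k : ℕ} (A : Matrix (Fin n) (Fin N) ℝ)
    (L₃ U₃ L₄ U₄ : ℝ) (hL₄0 : 0 ≤ L₄) (hU₄0 : 0 ≤ U₄)
    (h₃ : aRIP A (3 * k) L₃ U₃) (h₄ : aRIP A (4 * k) L₄ U₄) (hL₃1 : L₃ < 1)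
    (x : Fin N → ℝ) (hx : sparse k x) (e y : Fin n → ℝ)
    (hy : y = fun i => A.mulVec x i + e i)
    (Tt : Finset (Fin N)) (hTt : Tt.card ≤ 3 * k)
    (xt : Fin N → ℝ) (hxt : xt = pinvVec A Tt y) :
    enormR (fun i => x i - xt i) ≤
      (1 + (L₄ + U₄) / (2 * (1 - L₃))) * enormR (restr Ttᶜ x)
        + (Real.sqrt (1 - L₃))⁻¹ * enormR e := by
  subst hy hxt
  set v := restr Ttᶜ x
  have hS : (Tt ∪ univ.filter (x · ≠ 0)).card ≤ 4 * k :=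
    (card_union_le _ _).trans (by unfold sparse at hx; omega)
  have hu₁ : enormR (pinvApply A Tt (A *ᵥ v)) ≤ (L₄ + U₄) / (2 * (1 - L₃)) * enormR v :=
    h₃.enormR_pinvApply_mulVec_le h₄ hL₃1 (add_nonneg hL₄0 hU₄0) hTt subset_union_left hS
      (fun i hi => mem_union_right _ (mem_filter.mpr ⟨mem_univ i, fun hx0 =>
        hi (by simp [v, restr, hx0])⟩))
      (fun i hi => by simp [v, restr, hi])
  have hu₂ := h₃.enormR_pinvApply_le hL₃1 hTt e
  calc enormR (x - pinvVec A Tt (A *ᵥ x + e))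
      ≤ enormR v + enormR (pinvApply A Tt (A *ᵥ v) + pinvApply A Tt e) := by
        rw [sub_pinvVec_eq (h₃.isUnit_det_subCols_transpose_mul_self hL₃1 hTt), ← enormR_zeroExtend]
        exact enormR_sub_le _ _
    _ ≤ enormR v + (enormR (pinvApply A Tt (A *ᵥ v)) + enormR (pinvApply A Tt e)) := by
        gcongr
        exact enormR_add_le _ _
    _ ≤ _ := by linarith

theorem stmt11 {n N k : ℕ} (A : Matrix (Fin n) (Fin N) ℝ)
    (L₃ U₃ L₄ U₄ : ℝ) (hL₃0 : 0 ≤ L₃) (hU₃0 : 0 ≤ U₃) (hL₄0 : 0 ≤ L₄) (hU₄0 : 0 ≤ U₄)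
    (h₃ : aRIP A (3 * k) L₃ U₃) (h₄ : aRIP A (4 * k) L₄ U₄) (hL₃1 : L₃ < 1)
    (x : Fin N → ℝ) (hx : sparse k x) (e y : Fin n → ℝ)
    (hy : y = fun i => A.mulVec x i + e i)
    (Tt : Finset (Fin N)) (hTt : Tt.card ≤ 3 * k)
    (xt : Fin N → ℝ) (hxt : xt = pinvVec A Tt y) :
    enormR (fun i => x i - xt i) ≤
      (1 + (L₄ + U₄) / (2 * (1 - L₃))) * enormR (restr Ttᶜ x)
        + (Real.sqrt (1 - L₃))⁻¹ * enormR e :=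
  stmt11_general A L₃ U₃ L₄ U₄ hL₄0 hU₄0 h₃ h₄ hL₃1 x hx e y hy Tt hTt xt hxt
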